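/- arXiv:2311.15397 — 4 statements merged into one kernel-verified Lean document; each statement's English description precedes it below -/
import Mathlib

section
/- Let f : ℝ → ℝ be continuous and let T > 0. Then for every t ∈ ℝ, ∫_0^t f(τ) dτ − ∫_0^t ( (1/T)·∫_0^T f(u+τ) dτ ) du = ∫_0^T ((T−τ)/T)·( f(τ) − f(t+τ) ) dτ. -/
open MeasureTheory intervalIntegral

/-- The integral identity underlying the domination lemma: for continuous `f` and `T > 0`,
the difference between `∫_0^t f` and the integral over `[0,t]` of the forward sliding
`T`-average of `f` equals a weighted boundary term. -/
theorem stmt_0 (f : ℝ → ℝ) (hf : Continuous f) (T : ℝ) (hT : 0 < T) (t : ℝ) :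
    (∫ τ in (0:ℝ)..t, f τ) -
      (∫ u in (0:ℝ)..t, (1 / T) * ∫ τ in (0:ℝ)..T, f (u + τ)) =
    ∫ τ in (0:ℝ)..T, ((T - τ) / T) * (f τ - f (t + τ)) := by
  set F : ℝ → ℝ := fun x => ∫ τ in (0:ℝ)..x, f τ with hFdef
  have hF : ∀ x : ℝ, HasDerivAt F (f x) x := fun x =>
    intervalIntegral.integral_hasDerivAt_right (hf.intervalIntegrable _ _)
      (hf.stronglyMeasurableAtFilter _ _) hf.continuousAt
  have hFc : Continuous F := Differentiable.continuous fun x => (hF x).differentiableAt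
  have hF0 : F 0 = 0 := intervalIntegral.integral_same
  -- inner integral
  have h1 : ∀ u : ℝ, (∫ τ in (0:ℝ)..T, f (u + τ)) = F (u + T) - F u := by
    intro u
    rw [intervalIntegral.integral_comp_add_left f u, add_zero]
    exact (intervalIntegral.integral_interval_sub_left (hf.intervalIntegrable _ _)
      (hf.intervalIntegrable _ _)).symm
  -- LHS: second integral
  have h2 : (∫ u in (0:ℝ)..t, (1 / T) * ∫ τ in (0:ℝ)..T, f (u + τ)) =
      (1 / T) * ((∫ x in T..(t + T), F x) - ∫ u in (0:ℝ)..t, F u) := by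
    rw [intervalIntegral.integral_const_mul]
    congr 1
    calc (∫ u in (0:ℝ)..t, ∫ τ in (0:ℝ)..T, f (u + τ))
        = ∫ u in (0:ℝ)..t, (F (u + T) - F u) := by
          exact intervalIntegral.integral_congr fun u _ => h1 u
      _ = (∫ u in (0:ℝ)..t, F (u + T)) - ∫ u in (0:ℝ)..t, F u := by
          exact intervalIntegral.integral_sub
            ((hFc.comp (continuous_id.add continuous_const)).intervalIntegrable _ _)
            (hFc.intervalIntegrable _ _)
      _ = (∫ x in T..(t + T), F x) - ∫ u in (0:ℝ)..t, F u := by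
          rw [intervalIntegral.integral_comp_add_right F T, zero_add]
  -- translated integral
  have h3 : (∫ τ in (0:ℝ)..T, F (t + τ)) = ∫ x in t..(t + T), F x := by
    rw [intervalIntegral.integral_comp_add_left F t, add_zero]
  -- additivity: key relation
  have h4 : (∫ x in (0:ℝ)..T, F x) + (∫ x in T..(t + T), F x)
      = (∫ x in (0:ℝ)..t, F x) + (∫ x in t..(t + T), F x) := by
    rw [intervalIntegral.integral_add_adjacent_intervals (hFc.intervalIntegrable _ _)
        (hFc.intervalIntegrable _ _),
      intervalIntegral.integral_add_adjacent_intervals (hFc.intervalIntegrable _ _)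
        (hFc.intervalIntegrable _ _)]
  -- RHS via integration by parts
  have hv : ∀ x ∈ Set.uIcc (0:ℝ) T, HasDerivAt (fun τ => F τ - F (t + τ))
      (f x - f (t + x)) x := by
    intro x _
    have h := ((hF (t + x)).comp x (((hasDerivAt_id x).const_add t)))
    simp only [mul_one] at h
    exact (hF x).sub h
  have hu : ∀ x ∈ Set.uIcc (0:ℝ) T, HasDerivAt (fun τ => (T - τ) / T) (-1 / T) x := by
    intro x _
    simpa using ((hasDerivAt_id x).const_sub T).div_const T
  have h5 : (∫ τ in (0:ℝ)..T, ((T - τ) / T) * (f τ - f (t + τ)))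
      = F t - (1 / T) * ((∫ τ in (0:ℝ)..T, F (t + τ)) - ∫ τ in (0:ℝ)..T, F τ) := by
    rw [intervalIntegral.integral_mul_deriv_eq_deriv_mul hu hv
      (intervalIntegrable_const)
      ((hf.sub (hf.comp (continuous_const.add continuous_id))).intervalIntegrable _ _)]
    have e1 : (∫ x in (0:ℝ)..T, -1 / T * (F x - F (t + x)))
        = (-1 / T) * ((∫ τ in (0:ℝ)..T, F τ) - ∫ τ in (0:ℝ)..T, F (t + τ)) := by
      rw [intervalIntegral.integral_const_mul]
      congr 1
      exact intervalIntegral.integral_sub (hFc.intervalIntegrable _ _)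
        ((hFc.comp (continuous_const.add continuous_id)).intervalIntegrable _ _)
    rw [e1]
    simp only [sub_self, zero_div, zero_mul, sub_zero, zero_add, hF0]
    field_simp
    rw [add_zero]; ring
  rw [h2, h5, h3]
  have hFt : (∫ τ in (0:ℝ)..t, f τ) = F t := rfl
  rw [hFt]
  have hTne : T ≠ 0 := ne_of_gt hT
  field_simp
  linarith [h4]
end

section
/- Let f : ℝ → ℝ be continuous with m ≤ f(x) ≤ M for all x ∈ ℝ, and let T > 0 and ε > 0. Define the sliding average avg(k) := (1/T)·∫_k^{k+T} f(u) du, and set E(t) := exp(∫_0^t f(u) du), R(t) := exp(∫_0^t (avg(u) − ε) du), S(t) := exp(∫_0^t (avg(u) + ε) du). Then for every t ∈ ℝ: exp(−εt − (T/2)(M−m)) ≤ E(t)/S(t) ≤ exp(−εt + (T/2)(M−m)), and exp(εt − (T/2)(M−m)) ≤ E(t)/R(t) ≤ exp(εt + (T/2)(M−m)). -/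
open MeasureTheory intervalIntegral Real

/-- The domination estimate (r ≺ d_{E^u}X ≺ s) along a single orbit: with `avg` the
sliding `T`-average of the expansion rate `f`, `E` the expansion cocycle of `f`, and
`R`, `S` the comparison cocycles built from `avg ∓ ε`, the ratios `E/S` and `E/R`
are pinched between explicit exponentials. -/
theorem stmt_2 (f : ℝ → ℝ) (hf : Continuous f) (m M : ℝ)
    (hm : ∀ x, m ≤ f x) (hM : ∀ x, f x ≤ M)
    (T ε : ℝ) (hT : 0 < T) (hε : 0 < ε)
    (avg E R S : ℝ → ℝ)
    (havg : ∀ k, avg k = (1 / T) * ∫ u in k..(k + T), f u)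
    (hE : ∀ t, E t = Real.exp (∫ u in (0:ℝ)..t, f u))
    (hR : ∀ t, R t = Real.exp (∫ u in (0:ℝ)..t, (avg u - ε)))
    (hS : ∀ t, S t = Real.exp (∫ u in (0:ℝ)..t, (avg u + ε)))
    (t : ℝ) :
    (Real.exp (-ε * t - (T / 2) * (M - m)) ≤ E t / S t ∧
      E t / S t ≤ Real.exp (-ε * t + (T / 2) * (M - m))) ∧
    (Real.exp (ε * t - (T / 2) * (M - m)) ≤ E t / R t ∧
      E t / R t ≤ Real.exp (ε * t + (T / 2) * (M - m))) := by
  have hfi : ∀ a b : ℝ, IntervalIntegrable f volume a b := fun a b =>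
    hf.intervalIntegrable a b
  set F : ℝ → ℝ := fun x => ∫ u in (0:ℝ)..x, f u with hFdef
  have hFcont : Continuous F := intervalIntegral.continuous_primitive hfi 0
  have havg' : ∀ k, avg k = (F (k + T) - F k) / T := by
    intro k
    have h : F k + ∫ u in k..(k + T), f u = F (k + T) :=
      intervalIntegral.integral_add_adjacent_intervals (hfi 0 k) (hfi k (k + T))
    rw [havg k]
    field_simp
    linarith [h]
  have hAvgCont : Continuous avg := by
    have : Continuous fun k => (F (k + T) - F k) / T :=
      (((hFcont.comp (continuous_id.add continuous_const)).sub hFcont)).div_const T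
    exact (funext havg' ▸ this)
  have hai : ∀ a b : ℝ, IntervalIntegrable avg volume a b := fun a b =>
    hAvgCont.intervalIntegrable a b
  -- key difference
  set D : ℝ := (∫ u in (0:ℝ)..t, f u) - ∫ u in (0:ℝ)..t, avg u with hD
  -- express ∫ avg
  have hint_avg : ∫ u in (0:ℝ)..t, avg u
      = (1 / T) * ((∫ u in t..(t + T), F u) - ∫ u in (0:ℝ)..T, F u) := by
    have h1 : ∫ u in (0:ℝ)..t, avg u
        = (1 / T) * ((∫ u in (0:ℝ)..t, F (u + T)) - ∫ u in (0:ℝ)..t, F u) := by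
      have : ∀ u, avg u = (1 / T) * (F (u + T) - F u) := by
        intro u; rw [havg' u]; ring
      simp_rw [this]
      rw [intervalIntegral.integral_const_mul]
      congr 1
      exact intervalIntegral.integral_sub
        ((hFcont.comp (continuous_id.add continuous_const)).intervalIntegrable 0 t)
        (hFcont.intervalIntegrable 0 t)
    have h2 : (∫ u in (0:ℝ)..t, F (u + T)) = ∫ u in T..(t + T), F u := by
      simpa using intervalIntegral.integral_comp_add_right (a := (0:ℝ)) (b := t) F T
    have h3 : (∫ u in T..(t + T), F u) - ∫ u in (0:ℝ)..t, F u
        = (∫ u in t..(t + T), F u) - ∫ u in (0:ℝ)..T, F u := by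
      have hTt : (∫ u in T..t, F u) + ∫ u in t..(t + T), F u = ∫ u in T..(t + T), F u :=
        intervalIntegral.integral_add_adjacent_intervals
          (hFcont.intervalIntegrable T t) (hFcont.intervalIntegrable t (t + T))
      have h0T : (∫ u in (0:ℝ)..T, F u) + ∫ u in T..t, F u = ∫ u in (0:ℝ)..t, F u :=
        intervalIntegral.integral_add_adjacent_intervals
          (hFcont.intervalIntegrable 0 T) (hFcont.intervalIntegrable T t)
      linarith
    rw [h1, h2, h3]
  -- G and its bounds
  set G : ℝ → ℝ := fun s => F t + F s - F (t + s) with hGdef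
  have hGcont : Continuous G :=
    (continuous_const.add hFcont).sub (hFcont.comp (continuous_const.add continuous_id))
  have hshift : ∀ s : ℝ, F (t + s) - F t = ∫ u in (0:ℝ)..s, f (t + u) := by
    intro s
    have h : F t + ∫ u in t..(t + s), f u = F (t + s) :=
      intervalIntegral.integral_add_adjacent_intervals (hfi 0 t) (hfi t (t + s))
    have h2 : (∫ u in (0:ℝ)..s, f (t + u)) = ∫ u in t..(t + s), f u := by
      simpa using intervalIntegral.integral_comp_add_left (a := (0:ℝ)) (b := s) f t
    linarith
  have hGbound : ∀ s ∈ Set.Icc (0:ℝ) T, |G s| ≤ (M - m) * s := by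
    intro s hs
    have hs0 : (0:ℝ) ≤ s := hs.1
    have h1 : (∫ u in (0:ℝ)..s, f u) ≤ M * s := by
      have := intervalIntegral.integral_mono_on hs0 (hfi 0 s)
        (intervalIntegrable_const) (fun x _ => hM x)
      simpa [mul_comm] using this
    have h2 : m * s ≤ ∫ u in (0:ℝ)..s, f u := by
      have := intervalIntegral.integral_mono_on hs0 (intervalIntegrable_const)
        (hfi 0 s) (fun x _ => hm x)
      simpa [mul_comm] using this
    have h3 : (∫ u in (0:ℝ)..s, f (t + u)) ≤ M * s := by
      have := intervalIntegral.integral_mono_on hs0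
        (((hf.comp (continuous_const.add continuous_id)).intervalIntegrable 0 s : IntervalIntegrable (fun u => f (t + u)) volume 0 s))
        (intervalIntegrable_const) (fun x _ => hM (t + x))
      simpa [mul_comm] using this
    have h4 : m * s ≤ ∫ u in (0:ℝ)..s, f (t + u) := by
      have := intervalIntegral.integral_mono_on hs0 (intervalIntegrable_const)
        (((hf.comp (continuous_const.add continuous_id)).intervalIntegrable 0 s : IntervalIntegrable (fun u => f (t + u)) volume 0 s))
        (fun x _ => hm (t + x))
      simpa [mul_comm] using this
    have hGs : G s = (∫ u in (0:ℝ)..s, f u) - ∫ u in (0:ℝ)..s, f (t + u) := by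
      have := hshift s
      simp only [hGdef]
      linarith
    rw [abs_le, hGs]
    constructor <;> nlinarith
  -- integral bound on G
  have hGint : |∫ s in (0:ℝ)..T, G s| ≤ (M - m) * (T ^ 2 / 2) := by
    have hub : (∫ s in (0:ℝ)..T, G s) ≤ ∫ s in (0:ℝ)..T, (M - m) * s := by
      apply intervalIntegral.integral_mono_on hT.le (hGcont.intervalIntegrable 0 T)
        ((continuous_const.mul continuous_id).intervalIntegrable 0 T)
      intro x hx
      exact (abs_le.mp (hGbound x hx)).2
    have hlb : (∫ s in (0:ℝ)..T, -((M - m) * s)) ≤ ∫ s in (0:ℝ)..T, G s := by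
      apply intervalIntegral.integral_mono_on hT.le
        (((continuous_const.mul continuous_id).neg).intervalIntegrable 0 T)
        (hGcont.intervalIntegrable 0 T)
      intro x hx
      simp only [Pi.neg_apply, Pi.mul_apply, id_eq]
      linarith [(abs_le.mp (hGbound x hx)).1]
    have hval : (∫ s in (0:ℝ)..T, (M - m) * s) = (M - m) * (T ^ 2 / 2) := by
      rw [intervalIntegral.integral_const_mul, integral_id]
      ring
    have hval' : (∫ s in (0:ℝ)..T, -((M - m) * s)) = -((M - m) * (T ^ 2 / 2)) := by
      rw [intervalIntegral.integral_neg, hval]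
    rw [abs_le]
    constructor <;> linarith
  -- D = (1/T) ∫ G
  have hDval : D = (1 / T) * ∫ s in (0:ℝ)..T, G s := by
    have hsplit : (∫ s in (0:ℝ)..T, G s)
        = (T * F t) + (∫ s in (0:ℝ)..T, F s) - ∫ s in (0:ℝ)..T, F (t + s) := by
      have : (∫ s in (0:ℝ)..T, G s)
          = (∫ s in (0:ℝ)..T, (F t + F s)) - ∫ s in (0:ℝ)..T, F (t + s) := by
        apply intervalIntegral.integral_sub
          ((continuous_const.add hFcont).intervalIntegrable 0 T)
          ((hFcont.comp (continuous_const.add continuous_id)).intervalIntegrable 0 T)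
      rw [this, intervalIntegral.integral_add (intervalIntegrable_const)
        (hFcont.intervalIntegrable 0 T)]
      simp [mul_comm]
    have hsh : (∫ s in (0:ℝ)..T, F (t + s)) = ∫ u in t..(t + T), F u := by
      simpa using intervalIntegral.integral_comp_add_left (a := (0:ℝ)) (b := T) F t
    have hFt : F t = ∫ u in (0:ℝ)..t, f u := rfl
    rw [hD, hint_avg]
    rw [hsplit, hsh]
    field_simp
    ring
  have hDbound : |D| ≤ (T / 2) * (M - m) := by
    rw [hDval, abs_mul, abs_of_pos (by positivity : (0:ℝ) < 1 / T)]
    calc (1 / T) * |∫ s in (0:ℝ)..T, G s| ≤ (1 / T) * ((M - m) * (T ^ 2 / 2)) := by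
          apply mul_le_mul_of_nonneg_left hGint (by positivity)
      _ = (T / 2) * (M - m) := by field_simp
  obtain ⟨hDlb, hDub⟩ := abs_le.mp hDbound
  -- ratios
  have hES : E t / S t = Real.exp (D - ε * t) := by
    rw [hE, hS, ← Real.exp_sub]
    congr 1
    rw [intervalIntegral.integral_add (hai 0 t) intervalIntegrable_const]
    simp [hD]
    ring
  have hER : E t / R t = Real.exp (D + ε * t) := by
    rw [hE, hR, ← Real.exp_sub]
    congr 1
    rw [intervalIntegral.integral_sub (hai 0 t) intervalIntegrable_const]
    simp [hD]
    ring
  rw [hES, hER]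
  refine ⟨⟨Real.exp_le_exp.mpr (by linarith), Real.exp_le_exp.mpr (by linarith)⟩,
    ⟨Real.exp_le_exp.mpr (by linarith), Real.exp_le_exp.mpr (by linarith)⟩⟩
end

section
/- Let f : ℝ → ℝ be continuous with m ≤ f(x) ≤ M for all x ∈ ℝ, and let T > 0 and ε > 0. Define the sliding average avg(k) := (1/T)·∫_k^{k+T} f(u) du, and set E(t) := exp(∫_0^t f(u) du), R(t) := exp(∫_0^t (avg(u) − ε) du), S(t) := exp(∫_0^t (avg(u) + ε) du). Then the integrals I₋ := ∫_{−∞}^0 (E(t)/R(t))² dt and I₊ := ∫_0^{+∞} (E(t)/S(t))² dt converge, and exp(−T(M−m))/ε ≤ I₋ + I₊ ≤ exp(T(M−m))/ε. -/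
open MeasureTheory Real Set

private lemma aux_integrableOn_Iic_comp_neg (g : ℝ → ℝ)
    (h : IntegrableOn (fun x => g (-x)) (Ici (0:ℝ))) : IntegrableOn g (Iic (0:ℝ)) := by
  rw [IntegrableOn, ← Measure.map_neg_eq_self (volume : Measure ℝ)]
  have m : MeasurableEmbedding fun x : ℝ => -x := (Homeomorph.neg ℝ).measurableEmbedding
  rw [Measure.restrict_map m.measurable (measurableSet_Iic)]
  rw [m.integrable_map_iff]
  simpa [Function.comp_def, neg_preimage, neg_Iic, neg_zero, IntegrableOn] using h

private lemma aux_integral_exp_Iic (b : ℝ) (hb : 0 < b) :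
    ∫ x in Iic (0:ℝ), Real.exp (b * x) = 1 / b := by
  have h1 : ∫ x in Iic (0:ℝ), Real.exp (b * x)
      = ∫ x in Ioi (0:ℝ), Real.exp (-(b * x)) := by
    have h0 := integral_comp_neg_Iic (0:ℝ) (fun x => Real.exp (-(b * x)))
    simp only [mul_neg, neg_neg, neg_zero] at h0
    exact h0
  have h2 : ∫ x in Ioi (0:ℝ), Real.exp (-(b * x)) = b⁻¹ * Real.exp 0 := by
    have := integral_comp_mul_left_Ioi (fun x => Real.exp (-x)) 0 hb
    simpa [mul_zero, integral_exp_neg_Ioi, integral_exp_Iic_zero, smul_eq_mul] using this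
  rw [h1, h2, Real.exp_zero, mul_one, one_div]

private lemma aux_integral_exp_Ici (b : ℝ) (hb : 0 < b) :
    ∫ x in Ici (0:ℝ), Real.exp (-(b * x)) = 1 / b := by
  rw [integral_Ici_eq_integral_Ioi]
  have := integral_comp_mul_left_Ioi (fun x => Real.exp (-x)) 0 hb
  simpa [mul_zero, integral_exp_neg_Ioi, integral_exp_Iic_zero, smul_eq_mul, one_div] using this

/-- The corollary bounding the averaged norm: the integrals
`I₋ = ∫_{−∞}^0 (E/R)² dt` and `I₊ = ∫_0^∞ (E/S)² dt` converge and
`exp(−T(M−m))/ε ≤ I₋ + I₊ ≤ exp(T(M−m))/ε`. -/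
theorem stmt_4 (f : ℝ → ℝ) (hf : Continuous f) (m M : ℝ)
    (hm : ∀ x, m ≤ f x) (hM : ∀ x, f x ≤ M)
    (T ε : ℝ) (hT : 0 < T) (hε : 0 < ε)
    (avg E R S : ℝ → ℝ)
    (havg : ∀ k, avg k = (1 / T) * ∫ u in k..(k + T), f u)
    (hE : ∀ t, E t = Real.exp (∫ u in (0:ℝ)..t, f u))
    (hR : ∀ t, R t = Real.exp (∫ u in (0:ℝ)..t, (avg u - ε)))
    (hS : ∀ t, S t = Real.exp (∫ u in (0:ℝ)..t, (avg u + ε))) :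
    IntegrableOn (fun t => (E t / R t) ^ 2) (Iic (0:ℝ)) ∧
    IntegrableOn (fun t => (E t / S t) ^ 2) (Ici (0:ℝ)) ∧
    Real.exp (-(T * (M - m))) / ε ≤
      (∫ t in Iic (0:ℝ), (E t / R t) ^ 2) + ∫ t in Ici (0:ℝ), (E t / S t) ^ 2 ∧
    (∫ t in Iic (0:ℝ), (E t / R t) ^ 2) + (∫ t in Ici (0:ℝ), (E t / S t) ^ 2) ≤
      Real.exp (T * (M - m)) / ε := by
  obtain ⟨c, hc⟩ : ∃ c : ℝ, c = T * (M - m) := ⟨_, rfl⟩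
  have hmM : m ≤ M := (hm 0).trans (hM 0)
  have hfi : ∀ a b : ℝ, IntervalIntegrable f volume a b := fun a b =>
    hf.intervalIntegrable a b
  obtain ⟨F, hFdef⟩ : ∃ F : ℝ → ℝ, F = fun t => ∫ u in (0:ℝ)..t, f u := ⟨_, rfl⟩
  have hFcont : Continuous F := by rw [hFdef]; exact intervalIntegral.continuous_primitive hfi 0
  have hFsub : ∀ a b : ℝ, ∫ u in a..b, f u = F b - F a := by
    intro a b
    have := intervalIntegral.integral_add_adjacent_intervals (hfi 0 a) (hfi a b)
    simp only [hFdef]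
    linarith [this]
  have havg' : ∀ u : ℝ, avg u = (1 / T) * (F (u + T) - F u) := by
    intro u; rw [havg u, hFsub]
  have hAvgCont : Continuous avg := by
    have : avg = fun u => (1 / T) * (F (u + T) - F u) := funext havg'
    rw [this]
    exact continuous_const.mul ((hFcont.comp (continuous_id.add continuous_const)).sub hFcont)
  have havgi : ∀ a b : ℝ, IntervalIntegrable avg volume a b := fun a b =>
    hAvgCont.intervalIntegrable a b
  have hFi2 : ∀ a b : ℝ, IntervalIntegrable F volume a b := fun a b =>
    hFcont.intervalIntegrable a b
  -- A t = ∫_t^{t+T} (F s - F t) ds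
  obtain ⟨A, hAdef⟩ : ∃ A : ℝ → ℝ, A = fun t => ∫ s in t..(t + T), (F s - F t) := ⟨_, rfl⟩
  -- bounds on A
  have hAbound : ∀ t : ℝ, m * (T ^ 2 / 2) ≤ A t ∧ A t ≤ M * (T ^ 2 / 2) := by
    intro t
    have hle : t ≤ t + T := by linarith
    have hheart : ∫ s in t..(t + T), (s - t) = T ^ 2 / 2 := by
      have h' : (∫ s in t..(t + T), (s - t)) = ∫ x in (t - t)..(t + T - t), x :=
        intervalIntegral.integral_comp_sub_right (fun s : ℝ => s) t
      rw [h', sub_self, show t + T - t = T by ring, integral_id]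
      ring
    have hci : ∀ r : ℝ, IntervalIntegrable (fun s => r * (s - t)) volume t (t + T) :=
      fun r => (continuous_const.mul (continuous_id.sub continuous_const)).intervalIntegrable _ _
    have hFi3 : IntervalIntegrable (fun s => F s - F t) volume t (t + T) :=
      (hFcont.sub continuous_const).intervalIntegrable _ _
    have hptL : ∀ s ∈ Icc t (t + T), m * (s - t) ≤ F s - F t := by
      intro s hs
      have h1 : F s - F t = ∫ u in t..s, f u := (hFsub t s).symm
      have h2 : ∫ u in t..s, (m : ℝ) ≤ ∫ u in t..s, f u :=
        intervalIntegral.integral_mono_on hs.1 (intervalIntegrable_const) (hfi t s)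
          (fun x _ => hm x)
      rw [intervalIntegral.integral_const, smul_eq_mul] at h2
      rw [h1]; nlinarith [h2]
    have hptU : ∀ s ∈ Icc t (t + T), F s - F t ≤ M * (s - t) := by
      intro s hs
      have h1 : F s - F t = ∫ u in t..s, f u := (hFsub t s).symm
      have h2 : ∫ u in t..s, f u ≤ ∫ u in t..s, (M : ℝ) :=
        intervalIntegral.integral_mono_on hs.1 (hfi t s) (intervalIntegrable_const)
          (fun x _ => hM x)
      rw [intervalIntegral.integral_const, smul_eq_mul] at h2
      rw [h1]; nlinarith [h2]
    constructor
    · have := intervalIntegral.integral_mono_on hle (hci m) hFi3 hptL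
      calc m * (T ^ 2 / 2) = ∫ s in t..(t + T), m * (s - t) := by
            rw [intervalIntegral.integral_const_mul, hheart]
        _ ≤ A t := by rw [hAdef]; exact this
    · have := intervalIntegral.integral_mono_on hle hFi3 (hci M) hptU
      calc A t ≤ ∫ s in t..(t + T), M * (s - t) := by rw [hAdef]; exact this
        _ = M * (T ^ 2 / 2) := by rw [intervalIntegral.integral_const_mul, hheart]
  -- the key function G t = ∫_0^t (f - avg)
  obtain ⟨G, hGdef⟩ : ∃ G : ℝ → ℝ, G = fun t => F t - ∫ u in (0:ℝ)..t, avg u := ⟨_, rfl⟩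
  have hGeq : ∀ t : ℝ, G t = (A 0 - A t) / T := by
    intro t
    have hIavg : ∫ u in (0:ℝ)..t, avg u
        = (1 / T) * ((∫ s in T..(t + T), F s) - ∫ s in (0:ℝ)..t, F s) := by
      have h1 : ∫ u in (0:ℝ)..t, avg u
          = ∫ u in (0:ℝ)..t, (1 / T) * (F (u + T) - F u) := by
        exact intervalIntegral.integral_congr (fun u _ => havg' u)
      rw [h1, intervalIntegral.integral_const_mul]
      congr 1
      have hFT : IntervalIntegrable (fun u : ℝ => F (u + T)) volume 0 t :=
        (hFcont.comp (continuous_add_right T)).intervalIntegrable 0 t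
      rw [intervalIntegral.integral_sub hFT (hFi2 0 t)]
      congr 1
      simpa using intervalIntegral.integral_comp_add_right (a := (0:ℝ)) (b := t) (f := F) T
    have hadd1 : (∫ s in T..t, F s) + ∫ s in t..(t + T), F s = ∫ s in T..(t + T), F s :=
      intervalIntegral.integral_add_adjacent_intervals (hFi2 T t) (hFi2 t (t + T))
    have hadd2 : (∫ s in (0:ℝ)..T, F s) + ∫ s in T..t, F s = ∫ s in (0:ℝ)..t, F s :=
      intervalIntegral.integral_add_adjacent_intervals (hFi2 0 T) (hFi2 T t)
    have hA : ∀ u : ℝ, ∫ s in u..(u + T), F s = A u + T * F u := by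
      intro u
      have : A u = (∫ s in u..(u + T), F s) - ∫ s in u..(u + T), (F u : ℝ) := by
        rw [hAdef]
        exact intervalIntegral.integral_sub (hFi2 u (u + T)) intervalIntegrable_const
      rw [intervalIntegral.integral_const, smul_eq_mul] at this
      have h2 : (u + T - u) = T := by ring
      rw [h2] at this
      linarith
    have hF0 : F 0 = 0 := by simp [hFdef]
    have hA0 : ∫ s in (0:ℝ)..T, F s = A 0 + T * F 0 := by
      have := hA 0; rwa [zero_add] at this
    have hAt := hA t
    rw [hGdef]
    simp only
    rw [hIavg]
    field_simp
    rw [hF0] at hA0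
    nlinarith [hadd1, hadd2, hA0, hAt]
  have hGbound : ∀ t : ℝ, -(c / 2) ≤ G t ∧ G t ≤ c / 2 := by
    intro t
    have h0 := hAbound 0
    have ht := hAbound t
    rw [hGeq t, hc]
    constructor
    · rw [le_div_iff₀ hT]
      nlinarith [h0.1, ht.2]
    · rw [div_le_iff₀ hT]
      nlinarith [h0.2, ht.1]
  have hc0 : 0 ≤ c := by rw [hc]; nlinarith [hmM, hT.le]
  -- rewrite the integrands
  have hRint : ∀ t : ℝ, ∫ u in (0:ℝ)..t, (avg u - ε) = (∫ u in (0:ℝ)..t, avg u) - ε * t := by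
    intro t
    rw [intervalIntegral.integral_sub (havgi 0 t) intervalIntegrable_const,
      intervalIntegral.integral_const, smul_eq_mul, sub_zero, mul_comm]
  have hSint : ∀ t : ℝ, ∫ u in (0:ℝ)..t, (avg u + ε) = (∫ u in (0:ℝ)..t, avg u) + ε * t := by
    intro t
    rw [intervalIntegral.integral_add (havgi 0 t) intervalIntegrable_const,
      intervalIntegral.integral_const, smul_eq_mul, sub_zero, mul_comm]
  have hER : ∀ t : ℝ, (E t / R t) ^ 2 = Real.exp (2 * G t) * Real.exp (2 * ε * t) := by
    intro t
    rw [hE t, hR t, ← Real.exp_sub, hRint t, ← Real.exp_add, sq, ← Real.exp_add]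
    congr 1
    simp only [hGdef, hFdef]
    ring
  have hES : ∀ t : ℝ, (E t / S t) ^ 2 = Real.exp (2 * G t) * Real.exp (-(2 * ε * t)) := by
    intro t
    rw [hE t, hS t, ← Real.exp_sub, hSint t, ← Real.exp_add, sq, ← Real.exp_add]
    congr 1
    simp only [hGdef, hFdef]
    ring
  -- pointwise bounds
  have hlowR : ∀ t : ℝ, Real.exp (-c) * Real.exp (2 * ε * t) ≤ (E t / R t) ^ 2 := by
    intro t
    rw [hER t]
    have : Real.exp (-c) ≤ Real.exp (2 * G t) :=
      Real.exp_le_exp.mpr (by have h := (hGbound t).1; linarith)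
    exact mul_le_mul_of_nonneg_right this (Real.exp_pos _).le
  have hhighR : ∀ t : ℝ, (E t / R t) ^ 2 ≤ Real.exp c * Real.exp (2 * ε * t) := by
    intro t
    rw [hER t]
    have : Real.exp (2 * G t) ≤ Real.exp c :=
      Real.exp_le_exp.mpr (by have h := (hGbound t).2; linarith)
    exact mul_le_mul_of_nonneg_right this (Real.exp_pos _).le
  have hlowS : ∀ t : ℝ, Real.exp (-c) * Real.exp (-(2 * ε * t)) ≤ (E t / S t) ^ 2 := by
    intro t
    rw [hES t]
    have : Real.exp (-c) ≤ Real.exp (2 * G t) :=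
      Real.exp_le_exp.mpr (by have h := (hGbound t).1; linarith)
    exact mul_le_mul_of_nonneg_right this (Real.exp_pos _).le
  have hhighS : ∀ t : ℝ, (E t / S t) ^ 2 ≤ Real.exp c * Real.exp (-(2 * ε * t)) := by
    intro t
    rw [hES t]
    have : Real.exp (2 * G t) ≤ Real.exp c :=
      Real.exp_le_exp.mpr (by have h := (hGbound t).2; linarith)
    exact mul_le_mul_of_nonneg_right this (Real.exp_pos _).le
  -- integrability of comparison functions
  have h2ε : (0:ℝ) < 2 * ε := by linarith
  have hIciInt : IntegrableOn (fun t : ℝ => Real.exp (-(2 * ε * t))) (Ici (0:ℝ)) := by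
    have := exp_neg_integrableOn_Ioi 0 h2ε
    rw [← integrableOn_Ici_iff_integrableOn_Ioi] at this
    simpa [neg_mul, mul_assoc] using this
  have hIicInt : IntegrableOn (fun t : ℝ => Real.exp (2 * ε * t)) (Iic (0:ℝ)) := by
    apply aux_integrableOn_Iic_comp_neg
    simpa [mul_neg] using hIciInt
  have hIciIntc : IntegrableOn (fun t : ℝ => Real.exp c * Real.exp (-(2 * ε * t))) (Ici (0:ℝ)) :=
    hIciInt.const_mul _
  have hIicIntc : IntegrableOn (fun t : ℝ => Real.exp c * Real.exp (2 * ε * t)) (Iic (0:ℝ)) :=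
    hIicInt.const_mul _
  -- continuity of integrands
  have hEcont : Continuous E := by
    have : E = fun t => Real.exp (F t) := funext fun t => by rw [hFdef]; exact hE t
    rw [this]; exact Real.continuous_exp.comp hFcont
  have hRcont : Continuous R := by
    have : R = fun t => Real.exp (∫ u in (0:ℝ)..t, (avg u - ε)) := funext hR
    rw [this]
    exact Real.continuous_exp.comp (intervalIntegral.continuous_primitive
      (fun a b => (hAvgCont.sub continuous_const).intervalIntegrable a b) 0)
  have hScont : Continuous S := by
    have : S = fun t => Real.exp (∫ u in (0:ℝ)..t, (avg u + ε)) := funext hS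
    rw [this]
    exact Real.continuous_exp.comp (intervalIntegral.continuous_primitive
      (fun a b => (hAvgCont.add continuous_const).intervalIntegrable a b) 0)
  -- integrability of the integrands
  have hintR : IntegrableOn (fun t => (E t / R t) ^ 2) (Iic (0:ℝ)) := by
    apply hIicIntc.mono' (((hEcont.div hRcont (fun t => by
      rw [hR t]; exact (Real.exp_pos _).ne')).pow 2).aestronglyMeasurable.restrict)
    filter_upwards with t
    rw [Real.norm_eq_abs, abs_of_nonneg (sq_nonneg _)]
    exact hhighR t
  have hintS : IntegrableOn (fun t => (E t / S t) ^ 2) (Ici (0:ℝ)) := by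
    apply hIciIntc.mono' (((hEcont.div hScont (fun t => by
      rw [hS t]; exact (Real.exp_pos _).ne')).pow 2).aestronglyMeasurable.restrict)
    filter_upwards with t
    rw [Real.norm_eq_abs, abs_of_nonneg (sq_nonneg _)]
    exact hhighS t
  -- values of comparison integrals
  have hvalIic : ∫ t in Iic (0:ℝ), Real.exp (2 * ε * t) = 1 / (2 * ε) := by
    have := aux_integral_exp_Iic (2 * ε) h2ε
    simpa [mul_assoc] using this
  have hvalIci : ∫ t in Ici (0:ℝ), Real.exp (-(2 * ε * t)) = 1 / (2 * ε) := by
    have := aux_integral_exp_Ici (2 * ε) h2ε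
    simpa [mul_assoc] using this
  refine ⟨hintR, hintS, ?_, ?_⟩
  · -- lower bound
    rw [← hc]
    have hl1 : Real.exp (-c) * (1 / (2 * ε)) ≤ ∫ t in Iic (0:ℝ), (E t / R t) ^ 2 := by
      calc Real.exp (-c) * (1 / (2 * ε))
          = ∫ t in Iic (0:ℝ), Real.exp (-c) * Real.exp (2 * ε * t) := by
            rw [integral_const_mul, hvalIic]
        _ ≤ _ := setIntegral_mono (hIicInt.const_mul _) hintR (fun t => hlowR t)
    have hl2 : Real.exp (-c) * (1 / (2 * ε)) ≤ ∫ t in Ici (0:ℝ), (E t / S t) ^ 2 := by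
      calc Real.exp (-c) * (1 / (2 * ε))
          = ∫ t in Ici (0:ℝ), Real.exp (-c) * Real.exp (-(2 * ε * t)) := by
            rw [integral_const_mul, hvalIci]
        _ ≤ _ := setIntegral_mono (hIciInt.const_mul _) hintS (fun t => hlowS t)
    have : Real.exp (-c) / ε = Real.exp (-c) * (1 / (2 * ε)) + Real.exp (-c) * (1 / (2 * ε)) := by
      field_simp; ring
    rw [this]
    exact add_le_add hl1 hl2
  · -- upper bound
    rw [← hc]
    have hu1 : (∫ t in Iic (0:ℝ), (E t / R t) ^ 2) ≤ Real.exp c * (1 / (2 * ε)) := by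
      calc (∫ t in Iic (0:ℝ), (E t / R t) ^ 2)
          ≤ ∫ t in Iic (0:ℝ), Real.exp c * Real.exp (2 * ε * t) :=
            setIntegral_mono hintR hIicIntc (fun t => hhighR t)
        _ = Real.exp c * (1 / (2 * ε)) := by rw [integral_const_mul, hvalIic]
    have hu2 : (∫ t in Ici (0:ℝ), (E t / S t) ^ 2) ≤ Real.exp c * (1 / (2 * ε)) := by
      calc (∫ t in Ici (0:ℝ), (E t / S t) ^ 2)
          ≤ ∫ t in Ici (0:ℝ), Real.exp c * Real.exp (-(2 * ε * t)) :=
            setIntegral_mono hintS hIciIntc (fun t => hhighS t)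
        _ = Real.exp c * (1 / (2 * ε)) := by rw [integral_const_mul, hvalIci]
    have : Real.exp c / ε = Real.exp c * (1 / (2 * ε)) + Real.exp c * (1 / (2 * ε)) := by
      field_simp; ring
    rw [this]
    exact add_le_add hu1 hu2
end

section
/- Let f : ℝ → ℝ be continuous with m ≤ f(x) ≤ M for all x ∈ ℝ, and let T > 0 and ε > 0. Define the sliding average avg(k) := (1/T)·∫_k^{k+T} f(u) du, and set E(t) := exp(∫_0^t f(u) du), R(t) := exp(∫_0^t (avg(u) − ε) du), S(t) := exp(∫_0^t (avg(u) + ε) du). Set I₋(k) := ∫_{−∞}^k (E(t)/R(t))² dt and I₊(k) := ∫_k^{+∞} (E(t)/S(t))² dt (both converge by the domination estimate), and N²(k) := R(k)²·I₋(k) + S(k)²·I₊(k). Let A := (I₊(0) − I₋(0))/(I₊(0) + I₋(0)). Then |A| ≤ 1 and the function k ↦ N²(k) is differentiable at k = 0 with derivative 2·(avg(0) + ε·A)·N²(0). -/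
open MeasureTheory Real Set

lemma exp_mul_integrableOn_Iic {b : ℝ} (hb : 0 < b) (k : ℝ) :
    IntegrableOn (fun x : ℝ => Real.exp (b * x)) (Iic k) := by
  rw [← (Measure.measurePreserving_neg (volume : Measure ℝ)).integrableOn_comp_preimage
      (Homeomorph.neg ℝ).measurableEmbedding]
  have h1 : (Neg.neg ⁻¹' Iic k : Set ℝ) = Ici (-k) := by ext x; simp [neg_le]
  rw [h1, integrableOn_Ici_iff_integrableOn_Ioi]
  have := exp_neg_integrableOn_Ioi (-k) hb
  simpa [Function.comp_def, mul_neg, neg_mul] using this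

lemma integral_Ici_sub_Ici' {f : ℝ → ℝ} {a b : ℝ} (ha : IntegrableOn f (Ici a))
    (hb : IntegrableOn f (Ici b)) :
    (∫ x in Ici a, f x) - (∫ x in Ici b, f x) = ∫ x in a..b, f x := by
  wlog hab : a ≤ b generalizing a b
  · rw [intervalIntegral.integral_symm, ← this hb ha (le_of_not_ge hab), neg_sub]
  rw [sub_eq_iff_eq_add, intervalIntegral.integral_of_le hab]
  have h1 : Ici a = Icc a b ∪ Ioi b := (Icc_union_Ioi_eq_Ici hab).symm
  rw [h1, setIntegral_union ((Iic_disjoint_Ioi le_rfl).mono_left Icc_subset_Iic_self)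
      measurableSet_Ioi (ha.mono_set (by rw [h1]; exact subset_union_left))
      (hb.mono_set Ioi_subset_Ici_self),
    integral_Icc_eq_integral_Ioc, ← MeasureTheory.integral_Ici_eq_integral_Ioi]

/-- Equation (1) in the proof of the expansion uniformization theorem, along a single
orbit: with `N²(k) = R(k)²·I₋(k) + S(k)²·I₊(k)` the square of the time-averaged norm
and `A = (I₊(0) − I₋(0))/(I₊(0) + I₋(0))`, one has `|A| ≤ 1` and `N²` is differentiable
at `0` with derivative `2·(avg(0) + ε·A)·N²(0)`. -/
theorem stmt_6 (f : ℝ → ℝ) (hf : Continuous f) (m M : ℝ)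
    (hm : ∀ x, m ≤ f x) (hM : ∀ x, f x ≤ M)
    (T ε : ℝ) (hT : 0 < T) (hε : 0 < ε)
    (avg E R S : ℝ → ℝ)
    (havg : ∀ k, avg k = (1 / T) * ∫ u in k..(k + T), f u)
    (hE : ∀ t, E t = Real.exp (∫ u in (0:ℝ)..t, f u))
    (hR : ∀ t, R t = Real.exp (∫ u in (0:ℝ)..t, (avg u - ε)))
    (hS : ∀ t, S t = Real.exp (∫ u in (0:ℝ)..t, (avg u + ε)))
    (Iminus Iplus N2 : ℝ → ℝ) (A : ℝ)
    (hIm : ∀ k, Iminus k = ∫ t in Iic k, (E t / R t) ^ 2)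
    (hIp : ∀ k, Iplus k = ∫ t in Ici k, (E t / S t) ^ 2)
    (hN2 : ∀ k, N2 k = R k ^ 2 * Iminus k + S k ^ 2 * Iplus k)
    (hA : A = (Iplus 0 - Iminus 0) / (Iplus 0 + Iminus 0)) :
    |A| ≤ 1 ∧ HasDerivAt N2 (2 * (avg 0 + ε * A) * N2 0) 0 := by
  have hfi : ∀ a b : ℝ, IntervalIntegrable f volume a b := fun a b => hf.intervalIntegrable a b
  set F : ℝ → ℝ := fun t => ∫ u in (0:ℝ)..t, f u with hFdef
  have hFd : ∀ t, HasDerivAt F (f t) t := fun t =>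
    intervalIntegral.integral_hasDerivAt_right (hfi 0 t)
      (hf.stronglyMeasurableAtFilter _ _) hf.continuousAt
  have hFc : Continuous F := continuous_iff_continuousAt.2 fun t => (hFd t).continuousAt
  have hF0 : F 0 = 0 := intervalIntegral.integral_same
  have hFsub : ∀ s t : ℝ, F s - F t = ∫ u in t..s, f u := fun s t =>
    intervalIntegral.integral_interval_sub_left (hfi 0 s) (hfi 0 t)
  set K : ℝ := max |m| |M| with hKdef
  have hK0 : 0 ≤ K := le_trans (abs_nonneg m) (le_max_left _ _)
  have hfK : ∀ x, |f x| ≤ K := by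
    intro x
    refine abs_le.2 ⟨le_trans ?_ (hm x), le_trans (hM x) ((le_abs_self M).trans (le_max_right _ _))⟩
    exact le_trans (neg_le_neg (le_max_left |m| |M|)) (neg_abs_le m)
  have hFlip : ∀ s t : ℝ, |F s - F t| ≤ K * |s - t| := by
    intro s t
    rw [hFsub s t]
    have := intervalIntegral.norm_integral_le_of_norm_le_const
      (C := K) (f := f) (a := t) (b := s) (fun x _ => hfK x)
    simpa [Real.norm_eq_abs] using this
  -- avg
  have havgeq : avg = fun k => (1 / T) * (F (k + T) - F k) := by
    funext k; rw [havg k, hFsub]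
  have havgc : Continuous avg := by
    rw [havgeq]
    exact continuous_const.mul ((hFc.comp (continuous_id.add continuous_const)).sub hFc)
  have havi : ∀ a b : ℝ, IntervalIntegrable avg volume a b := fun a b =>
    havgc.intervalIntegrable a b
  set ψ : ℝ → ℝ := fun t => ∫ u in (0:ℝ)..t, avg u with hψdef
  have hψd : ∀ t, HasDerivAt ψ (avg t) t := fun t =>
    intervalIntegral.integral_hasDerivAt_right (havi 0 t)
      (havgc.stronglyMeasurableAtFilter _ _) havgc.continuousAt
  have hψc : Continuous ψ := continuous_iff_continuousAt.2 fun t => (hψd t).continuousAt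
  have hψ0 : ψ 0 = 0 := intervalIntegral.integral_same
  -- second primitive
  have hFi : ∀ a b : ℝ, IntervalIntegrable F volume a b := fun a b => hFc.intervalIntegrable a b
  set P : ℝ → ℝ := fun t => ∫ s in (0:ℝ)..t, F s with hPdef
  have hPd : ∀ t, HasDerivAt P (F t) t := fun t =>
    intervalIntegral.integral_hasDerivAt_right (hFi 0 t)
      (hFc.stronglyMeasurableAtFilter _ _) hFc.continuousAt
  have hPsub : ∀ s t : ℝ, P s - P t = ∫ u in t..s, F u := fun s t =>
    intervalIntegral.integral_interval_sub_left (hFi 0 s) (hFi 0 t)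
  set H : ℝ → ℝ := fun t => (1 / T) * (P (t + T) - P t) with hHdef
  have hHd : ∀ t, HasDerivAt H (avg t) t := by
    intro t
    have h1 : HasDerivAt (fun t => P (t + T)) (F (t + T)) t := by
      have := HasDerivAt.comp t (hPd (t + T)) ((hasDerivAt_id t).add_const T)
      simpa [Function.comp_def] using this
    have h2 := ((h1.sub (hPd t)).const_mul (1 / T))
    rw [havgeq]
    exact h2
  -- ψ = H - H 0
  have hψH : ∀ t, ψ t = H t - H 0 := by
    intro t
    have hdiff : Differentiable ℝ (fun t => ψ t - H t) := fun t =>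
      ((hψd t).sub (hHd t)).differentiableAt
    have hz : ∀ x, deriv (fun t => ψ t - H t) x = 0 := fun x => by
      rw [show (fun t => ψ t - H t) = ψ - H from rfl, ((hψd x).sub (hHd x)).deriv]; ring
    have := is_const_of_deriv_eq_zero hdiff hz t 0
    have hψ0' : ψ 0 - H 0 = -H 0 := by rw [hψ0]; ring
    linarith [this, hψ0']
  -- bound |F t - H t| ≤ K * T
  have hFH : ∀ t, |F t - H t| ≤ K * T := by
    intro t
    have hrw : F t - H t = (1 / T) * ∫ s in t..(t + T), (F t - F s) := by
      rw [intervalIntegral.integral_sub (intervalIntegrable_const) (hFi t (t + T)),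
        intervalIntegral.integral_const, ← hPsub]
      simp only [hHdef, smul_eq_mul]
      field_simp
      ring
    have hb : ‖∫ s in t..(t + T), (F t - F s)‖ ≤ (K * T) * |(t + T) - t| := by
      apply intervalIntegral.norm_integral_le_of_norm_le_const
      intro s hs
      rw [Set.uIoc_of_le (by linarith)] at hs
      rw [Real.norm_eq_abs]
      have h1 : |F t - F s| ≤ K * |t - s| := hFlip t s
      have h2 : |t - s| ≤ T := by
        rw [abs_sub_comm, abs_of_nonneg (by linarith [hs.1.le])]
        linarith [hs.2]
      exact h1.trans (mul_le_mul_of_nonneg_left h2 hK0)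
    rw [hrw, abs_mul, abs_of_nonneg (by positivity : (0:ℝ) ≤ 1 / T)]
    rw [Real.norm_eq_abs] at hb
    have h3 : |(t + T) - t| = T := by rw [show (t + T) - t = T by ring, abs_of_pos hT]
    rw [h3] at hb
    calc 1 / T * |∫ s in t..(t + T), (F t - F s)| ≤ 1 / T * (K * T * T) := by
          apply mul_le_mul_of_nonneg_left hb (by positivity)
      _ = K * T := by field_simp
  have hbound : ∀ t, |F t - ψ t| ≤ 2 * (K * T) := by
    intro t
    have : F t - ψ t = (F t - H t) + H 0 := by rw [hψH t]; ring
    rw [this]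
    have h1 : |H 0| ≤ K * T := by
      have := hFH 0
      rwa [hF0, zero_sub, abs_neg] at this
    calc |(F t - H t) + H 0| ≤ |F t - H t| + |H 0| := abs_add_le _ _
      _ ≤ K * T + K * T := add_le_add (hFH t) h1
      _ = 2 * (K * T) := by ring
  -- integrands
  set gm : ℝ → ℝ := fun t => Real.exp (2 * (F t - ψ t) + 2 * ε * t) with hgmdef
  set gp : ℝ → ℝ := fun t => Real.exp (2 * (F t - ψ t) - 2 * ε * t) with hgpdef
  have hψsub : ∀ t, (∫ u in (0:ℝ)..t, (avg u - ε)) = ψ t - ε * t := by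
    intro t
    rw [intervalIntegral.integral_sub (havi 0 t) intervalIntegrable_const,
      intervalIntegral.integral_const]
    simp [mul_comm, hψdef]
  have hψadd : ∀ t, (∫ u in (0:ℝ)..t, (avg u + ε)) = ψ t + ε * t := by
    intro t
    rw [intervalIntegral.integral_add (havi 0 t) intervalIntegrable_const,
      intervalIntegral.integral_const]
    simp [mul_comm, hψdef]
  have hER : ∀ t, (E t / R t) ^ 2 = gm t := by
    intro t
    rw [hE t, hR t, hψsub t, ← Real.exp_sub, sq, ← Real.exp_add]
    congr 1; ring
  have hES : ∀ t, (E t / S t) ^ 2 = gp t := by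
    intro t
    rw [hE t, hS t, hψadd t, ← Real.exp_sub, sq, ← Real.exp_add]
    congr 1; ring
  have hgmc : Continuous gm := by
    apply Real.continuous_exp.comp
    exact ((continuous_const.mul (hFc.sub hψc)).add (continuous_const.mul continuous_id))
  have hgpc : Continuous gp := by
    apply Real.continuous_exp.comp
    exact ((continuous_const.mul (hFc.sub hψc)).sub (continuous_const.mul continuous_id))
  have hgm0 : gm 0 = 1 := by simp [hgmdef, hF0, hψ0]
  have hgp0 : gp 0 = 1 := by simp [hgpdef, hF0, hψ0]
  -- integrability
  set Cb : ℝ := Real.exp (2 * (2 * (K * T))) with hCbdef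
  have hIntm : ∀ k, IntegrableOn gm (Iic k) := by
    intro k
    apply Integrable.mono' (((exp_mul_integrableOn_Iic (b := 2 * ε) (by positivity) k)).const_mul Cb)
      hgmc.aestronglyMeasurable
    filter_upwards with t
    rw [Real.norm_eq_abs, abs_of_nonneg (Real.exp_pos _).le]
    show Real.exp (2 * (F t - ψ t) + 2 * ε * t) ≤ Cb * Real.exp (2 * ε * t)
    rw [Real.exp_add, hCbdef]
    exact mul_le_mul_of_nonneg_right
      (Real.exp_le_exp.2 (by linarith [(abs_le.1 (hbound t)).2])) (Real.exp_pos _).le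
  have hIntp : ∀ k, IntegrableOn gp (Ici k) := by
    intro k
    have hbase : IntegrableOn (fun t => Real.exp (-(2 * ε) * t)) (Ici k) :=
      (integrableOn_Ici_iff_integrableOn_Ioi (by simp)).2 (exp_neg_integrableOn_Ioi k (by positivity))
    apply Integrable.mono' (hbase.const_mul Cb) hgpc.aestronglyMeasurable
    filter_upwards with t
    rw [Real.norm_eq_abs, abs_of_nonneg (Real.exp_pos _).le]
    show Real.exp (2 * (F t - ψ t) - 2 * ε * t) ≤ Cb * Real.exp (-(2 * ε) * t)
    have h2 : 2 * (F t - ψ t) - 2 * ε * t = 2 * (F t - ψ t) + -(2 * ε) * t := by ring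
    rw [h2, Real.exp_add, hCbdef]
    exact mul_le_mul_of_nonneg_right
      (Real.exp_le_exp.2 (by linarith [(abs_le.1 (hbound t)).2])) (Real.exp_pos _).le
  -- rewrite Iminus, Iplus
  have hImg : ∀ k, Iminus k = ∫ t in Iic k, gm t := by
    intro k
    rw [hIm k]
    congr 1
    exact funext hER
  have hIpg : ∀ k, Iplus k = ∫ t in Ici k, gp t := by
    intro k
    rw [hIp k]
    congr 1
    exact funext hES
  -- derivatives of I∓
  have hImDeriv : HasDerivAt Iminus (gm 0) 0 := by
    have heq : Iminus = fun k => Iminus 0 + ∫ t in (0:ℝ)..k, gm t := by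
      funext k
      have := intervalIntegral.integral_Iic_sub_Iic (hIntm 0) (hIntm k)
      rw [hImg k, hImg 0]
      linarith [this]
    rw [heq]
    exact (intervalIntegral.integral_hasDerivAt_right (hgmc.intervalIntegrable _ _)
      (hgmc.stronglyMeasurableAtFilter _ _) hgmc.continuousAt).const_add (Iminus 0)
  have hIpDeriv : HasDerivAt Iplus (-(gp 0)) 0 := by
    have heq : Iplus = fun k => Iplus 0 - ∫ t in (0:ℝ)..k, gp t := by
      funext k
      have := integral_Ici_sub_Ici' (hIntp 0) (hIntp k)
      rw [hIpg k, hIpg 0]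
      linarith [this]
    rw [heq]
    exact (intervalIntegral.integral_hasDerivAt_right (hgpc.intervalIntegrable _ _)
      (hgpc.stronglyMeasurableAtFilter _ _) hgpc.continuousAt).const_sub (Iplus 0)
  -- derivatives of R², S²
  have hR0 : R 0 = 1 := by rw [hR 0]; simp
  have hS0 : S 0 = 1 := by rw [hS 0]; simp
  have hRc : Continuous (fun u => avg u - ε) := havgc.sub continuous_const
  have hSc : Continuous (fun u => avg u + ε) := havgc.add continuous_const
  have hR2 : HasDerivAt (fun k => R k ^ 2) (2 * (avg 0 - ε)) 0 := by
    have hRf : (fun k => R k ^ 2) =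
        fun k => Real.exp (∫ u in (0:ℝ)..k, (avg u - ε)) ^ 2 := by
      funext k; rw [hR k]
    rw [hRf]
    have hd : HasDerivAt (fun k => ∫ u in (0:ℝ)..k, (avg u - ε)) (avg 0 - ε) 0 :=
      intervalIntegral.integral_hasDerivAt_right (hRc.intervalIntegrable _ _)
        (hRc.stronglyMeasurableAtFilter _ _) hRc.continuousAt
    have := (hd.exp).pow 2
    simpa [Pi.pow_def] using this
  have hS2 : HasDerivAt (fun k => S k ^ 2) (2 * (avg 0 + ε)) 0 := by
    have hSf : (fun k => S k ^ 2) =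
        fun k => Real.exp (∫ u in (0:ℝ)..k, (avg u + ε)) ^ 2 := by
      funext k; rw [hS k]
    rw [hSf]
    have hd : HasDerivAt (fun k => ∫ u in (0:ℝ)..k, (avg u + ε)) (avg 0 + ε) 0 :=
      intervalIntegral.integral_hasDerivAt_right (hSc.intervalIntegrable _ _)
        (hSc.stronglyMeasurableAtFilter _ _) hSc.continuousAt
    have := (hd.exp).pow 2
    simpa [Pi.pow_def] using this
  -- nonnegativity and key identity
  have hIm0 : 0 ≤ Iminus 0 := by
    rw [hIm 0]; exact setIntegral_nonneg measurableSet_Iic fun t _ => sq_nonneg _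
  have hIp0 : 0 ≤ Iplus 0 := by
    rw [hIp 0]; exact setIntegral_nonneg measurableSet_Ici fun t _ => sq_nonneg _
  have hkey : Iplus 0 - Iminus 0 = A * (Iplus 0 + Iminus 0) := by
    by_cases hs : Iplus 0 + Iminus 0 = 0
    · have h1 : Iplus 0 = 0 := by linarith
      have h2 : Iminus 0 = 0 := by linarith
      rw [h1, h2]; ring
    · rw [hA, div_mul_cancel₀ _ hs]
  constructor
  · by_cases hs : Iplus 0 + Iminus 0 = 0
    · rw [hA, hs]; simp
    · have hpos : 0 < Iplus 0 + Iminus 0 := lt_of_le_of_ne (by linarith) (Ne.symm hs)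
      rw [hA, abs_div, abs_of_pos hpos, div_le_one hpos]
      exact abs_le.2 ⟨by linarith, by linarith⟩
  · have hN2f : N2 = fun k => R k ^ 2 * Iminus k + S k ^ 2 * Iplus k := funext hN2
    rw [hN2f]
    have hmain := (hR2.mul hImDeriv).add (hS2.mul hIpDeriv)
    have hval : 2 * (avg 0 - ε) * Iminus 0 + R 0 ^ 2 * gm 0 +
        (2 * (avg 0 + ε) * Iplus 0 + S 0 ^ 2 * -(gp 0)) =
        2 * (avg 0 + ε * A) * (R 0 ^ 2 * Iminus 0 + S 0 ^ 2 * Iplus 0) := by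
      rw [hR0, hS0, hgm0, hgp0]
      ring_nf
      linear_combination 2 * ε * hkey
    rw [← hval]
    exact hmain
end
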